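/- The integral of the error-sum function of Pierce expansions over [0,1] equals -1/8: ∫₀¹ E(x) dx = -1/8. -/

import Mathlib

open scoped BigOperators

/-- Reciprocal of an extended natural number as a real, with `1/∞ = 0`. -/
noncomputable def pinv (a : ℕ∞) : ℝ := ((a.toNat : ℕ) : ℝ)⁻¹

/-- First Pierce digit: `⌊1/x⌋` for `x ≠ 0`, and `∞` for `x = 0`. -/
noncomputable def pd1 (x : ℝ) : ℕ∞ := if x = 0 then ⊤ else (⌊x⁻¹⌋₊ : ℕ∞)

/-- Pierce map `T(x) = 1 - ⌊1/x⌋ x` for `x ≠ 0`, `T(0) = 0`. -/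
noncomputable def pT (x : ℝ) : ℝ := if x = 0 then 0 else 1 - (⌊x⁻¹⌋₊ : ℝ) * x

/-- `n`-th Pierce digit `d_n(x) = d_1(T^{n-1} x)` (for `n ≥ 1`). -/
noncomputable def pdig (n : ℕ) (x : ℝ) : ℕ∞ := pd1 (pT^[n-1] x)

/-- `1/(d_1(x) ⋯ d_n(x))`, with the convention that a factor `∞` makes it `0`. -/
noncomputable def pprodR (n : ℕ) (x : ℝ) : ℝ := ∏ k ∈ Finset.Icc 1 n, pinv (pdig k x)

/-- `n`-th partial sum `s_n(x)` of the Pierce expansion of `x`. -/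
noncomputable def psum (n : ℕ) (x : ℝ) : ℝ :=
  ∑ k ∈ Finset.Icc 1 n, (-1 : ℝ) ^ (k + 1) * pprodR k x

/-- The error-sum function of Pierce expansions `E(x) = Σ_{n≥1} (x - s_n(x))`. -/
noncomputable def pE (x : ℝ) : ℝ := ∑' n : ℕ, (x - psum (n + 1) x)

/-- A Pierce sequence (0-indexed: `σ k` is the paper's `σ_{k+1}`): terms are positive, strictly
increasing while finite, and once a term is `∞` all later terms are `∞`. -/
def IsPierce (σ : ℕ → ℕ∞) : Prop :=
  1 ≤ σ 0 ∧ ∀ n, σ n < σ (n + 1) ∨ (σ n = ⊤ ∧ σ (n + 1) = ⊤)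

/-- `n`-th partial sum `φ_n(σ)`. -/
noncomputable def pphiN (n : ℕ) (σ : ℕ → ℕ∞) : ℝ :=
  ∑ k ∈ Finset.range n, (-1 : ℝ) ^ k * ∏ i ∈ Finset.range (k + 1), pinv (σ i)

/-- `φ(σ) = Σ_{k≥1} (-1)^{k+1}/(σ_1 ⋯ σ_k)`. -/
noncomputable def pphi (σ : ℕ → ℕ∞) : ℝ :=
  ∑' k : ℕ, (-1 : ℝ) ^ k * ∏ i ∈ Finset.range (k + 1), pinv (σ i)

/-- The error-sum function of Pierce sequences `E*(σ) = Σ_{n≥1} (φ(σ) - φ_n(σ))`. -/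
noncomputable def pEstar (σ : ℕ → ℕ∞) : ℝ := ∑' n : ℕ, (pphi σ - pphiN (n + 1) σ)

/-- The series formula `Σ_{n≥1} (-1)^n n/(σ_1 ⋯ σ_{n+1})` for the error-sum of a sequence. -/
noncomputable def pEstarSeries (σ : ℕ → ℕ∞) : ℝ :=
  ∑' n : ℕ, (-1 : ℝ) ^ (n + 1) * (n + 1) * ∏ i ∈ Finset.range (n + 2), pinv (σ i)

/-- The metric `ρ(x,y) = 1/x + 1/y` for `x ≠ y` (with `1/∞ = 0`), `ρ(x,x) = 0`. -/
noncomputable def prho (x y : ℕ∞) : ℝ := if x = y then 0 else pinv x + pinv y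

/-- The metric `ρ^ℕ(σ,τ) = Σ_{n≥1} ρ(σ_n, τ_n)/n!` on sequences. -/
noncomputable def prhoN (σ τ : ℕ → ℕ∞) : ℝ :=
  ∑' n : ℕ, prho (σ n) (τ n) / ((n + 1).factorial : ℝ)

/-!
For `x ∈ [0,1]` one has `x - s_n(x) = (-1)^n T^n(x) / (d_1(x) ⋯ d_n(x))` with `T^n(x) ≤ 1` and
`d_k(x) ≥ k`, so the terms of `E` are bounded by `1/n!`: `E` is a bounded a.e. limit of measurable
partial sums, hence integrable on `[0,1]`. On `(1/2,1]` the first digit is `1` and `T x = 1 - x`,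
which gives `E(x) = (x - 1) - E(1 - x)`. After the substitution `x ↦ 1 - x` the integrals of `E`
over `[0,1/2]` and of `E(1 - x)` over `[1/2,1]` cancel, leaving `∫_{1/2}^1 (x - 1) dx = -1/8`.
-/

open MeasureTheory Set Filter

lemma pinv_nonneg (a : ℕ∞) : 0 ≤ pinv a := by
  unfold pinv; positivity

lemma pinv_pd1 (x : ℝ) : pinv (pd1 x) = if x = 0 then 0 else ((⌊x⁻¹⌋₊ : ℝ))⁻¹ := by
  unfold pd1 pinv
  split <;> simp

lemma pT_zero : pT 0 = 0 := by simp [pT]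

lemma pT_of_ne_zero {x : ℝ} (hx : x ≠ 0) : pT x = 1 - (⌊x⁻¹⌋₊ : ℝ) * x := by simp [pT, hx]

lemma pinv_pd1_le {y : ℝ} {m : ℕ} (hm : 0 < m) (hy : y ≤ (m : ℝ)⁻¹) :
    pinv (pd1 y) ≤ (m : ℝ)⁻¹ := by
  rw [pinv_pd1]
  split_ifs with h0
  · positivity
  rcases lt_or_gt_of_ne h0 with hneg | hpos
  · simp [Nat.floor_of_nonpos (inv_nonpos.mpr hneg.le)]
  · have hm' : (0 : ℝ) < m := by exact_mod_cast hm
    have : (m : ℝ) ≤ ⌊y⁻¹⌋₊ := by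
      exact_mod_cast Nat.le_floor ((le_inv_comm₀ hpos hm').mp hy)
    exact inv_anti₀ hm' this

lemma pT_nonneg {y : ℝ} (hy : 0 ≤ y) : 0 ≤ pT y := by
  rcases hy.eq_or_lt with rfl | hpos
  · simp [pT_zero]
  rw [pT_of_ne_zero hpos.ne']
  have : (⌊y⁻¹⌋₊ : ℝ) * y ≤ y⁻¹ * y := by gcongr; exact Nat.floor_le (by positivity)
  rw [inv_mul_cancel₀ hpos.ne'] at this
  linarith

-- `y > 1/(d+1)` for `d = ⌊1/y⌋`, so `(d+1)(1 - d y) ≤ 1`.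
lemma pT_le_inv_floor_succ {y : ℝ} (hy : 0 < y) : pT y ≤ ((⌊y⁻¹⌋₊ : ℝ) + 1)⁻¹ := by
  set d : ℝ := (⌊y⁻¹⌋₊ : ℝ)
  have hd : 0 ≤ d := Nat.cast_nonneg _
  have hdy : 1 < (d + 1) * y := by
    have := mul_lt_mul_of_pos_right (Nat.lt_floor_add_one y⁻¹) hy
    rwa [inv_mul_cancel₀ hy.ne'] at this
  rw [pT_of_ne_zero hy.ne', inv_eq_one_div (d + 1), le_div_iff₀ (by positivity)]
  nlinarith

lemma pT_iterate_mem {x : ℝ} (hx0 : 0 ≤ x) (hx1 : x ≤ 1) (k : ℕ) :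
    0 ≤ pT^[k] x ∧ pT^[k] x ≤ ((k + 1 : ℕ) : ℝ)⁻¹ := by
  induction k with
  | zero => simpa using ⟨hx0, hx1⟩
  | succ k ih =>
    obtain ⟨h0, h1⟩ := ih
    rw [Function.iterate_succ_apply']
    refine ⟨pT_nonneg h0, ?_⟩
    rcases h0.eq_or_lt with h | hpos
    · rw [← h, pT_zero]; positivity
    refine (pT_le_inv_floor_succ hpos).trans (inv_anti₀ (by positivity) ?_)
    have : k + 1 ≤ ⌊(pT^[k] x)⁻¹⌋₊ :=
      Nat.le_floor ((le_inv_comm₀ hpos (by positivity)).mp h1)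
    exact_mod_cast Nat.succ_le_succ this

lemma pinv_pd1_sub_eq_mul_pT {y : ℝ} (hy0 : 0 ≤ y) (hy1 : y ≤ 1) :
    pinv (pd1 y) - y = pinv (pd1 y) * pT y := by
  rcases hy0.eq_or_lt with rfl | hpos
  · simp [pinv_pd1, pT_zero]
  have hd : (⌊y⁻¹⌋₊ : ℝ) ≠ 0 := by
    have : 1 ≤ ⌊y⁻¹⌋₊ := Nat.le_floor (by simpa using one_le_inv_iff₀.mpr ⟨hpos, hy1⟩)
    positivity
  rw [pinv_pd1, if_neg hpos.ne', pT_of_ne_zero hpos.ne', mul_sub, mul_one, ← mul_assoc,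
    inv_mul_cancel₀ hd, one_mul]

lemma pdig_succ_succ (n : ℕ) (x : ℝ) : pdig (n + 2) x = pdig (n + 1) (pT x) := by
  simp [pdig, Function.iterate_succ_apply]

lemma pdig_one (x : ℝ) : pdig 1 x = pd1 x := rfl

lemma pprodR_zero (x : ℝ) : pprodR 0 x = 1 := by simp [pprodR]

lemma pprodR_succ (n : ℕ) (x : ℝ) :
    pprodR (n + 1) x = pprodR n x * pinv (pdig (n + 1) x) :=
  Finset.prod_Icc_succ_top (by omega) _

lemma pprodR_succ' (n : ℕ) (x : ℝ) :
    pprodR (n + 1) x = pinv (pd1 x) * pprodR n (pT x) := by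
  induction n with
  | zero => simp [pprodR_succ, pprodR_zero, pdig_one]
  | succ n ih => rw [pprodR_succ, ih, pdig_succ_succ, pprodR_succ, mul_assoc]

lemma pprodR_nonneg (n : ℕ) (x : ℝ) : 0 ≤ pprodR n x :=
  Finset.prod_nonneg fun _ _ => pinv_nonneg _

lemma pprodR_le_inv_factorial {x : ℝ} (hx0 : 0 ≤ x) (hx1 : x ≤ 1) (n : ℕ) :
    pprodR n x ≤ ((n.factorial : ℕ) : ℝ)⁻¹ := by
  induction n with
  | zero => simp [pprodR_zero]
  | succ n ih =>
    have hdig : pinv (pdig (n + 1) x) ≤ ((n + 1 : ℕ) : ℝ)⁻¹ :=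
      pinv_pd1_le n.succ_pos (pT_iterate_mem hx0 hx1 n).2
    rw [pprodR_succ, Nat.factorial_succ, Nat.cast_mul, mul_inv, mul_comm (_ : ℝ)⁻¹]
    exact mul_le_mul ih hdig (pinv_nonneg _) (by positivity)

lemma psum_zero (x : ℝ) : psum 0 x = 0 := by simp [psum]

lemma psum_succ (n : ℕ) (x : ℝ) :
    psum (n + 1) x = psum n x + (-1 : ℝ) ^ (n + 2) * pprodR (n + 1) x :=
  Finset.sum_Icc_succ_top (by omega) _

lemma psum_succ' (n : ℕ) (x : ℝ) :
    psum (n + 1) x = pinv (pd1 x) * (1 - psum n (pT x)) := by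
  induction n with
  | zero => simp [psum_succ, psum_zero, pprodR_succ', pprodR_zero]
  | succ n ih =>
    rw [psum_succ, ih, pprodR_succ', psum_succ]
    ring

lemma sub_psum_eq {x : ℝ} (hx0 : 0 ≤ x) (hx1 : x ≤ 1) (n : ℕ) :
    x - psum n x = (-1 : ℝ) ^ n * pprodR n x * pT^[n] x := by
  induction n with
  | zero => simp [psum_zero, pprodR_zero]
  | succ n ih =>
    obtain ⟨hy0, hy1⟩ := pT_iterate_mem hx0 hx1 n
    have hstep := pinv_pd1_sub_eq_mul_pT hy0 (hy1.trans (inv_le_one_of_one_le₀ (by simp)))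
    have hdig : pdig (n + 1) x = pd1 (pT^[n] x) := rfl
    rw [psum_succ, pprodR_succ, Function.iterate_succ_apply', hdig]
    linear_combination ih - (-1 : ℝ) ^ n * pprodR n x * hstep

lemma abs_sub_psum_le {x : ℝ} (hx0 : 0 ≤ x) (hx1 : x ≤ 1) (n : ℕ) :
    |x - psum n x| ≤ ((n.factorial : ℕ) : ℝ)⁻¹ := by
  obtain ⟨hy0, hy1⟩ := pT_iterate_mem hx0 hx1 n
  have hy1' : pT^[n] x ≤ 1 := hy1.trans (inv_le_one_of_one_le₀ (by simp))
  rw [sub_psum_eq hx0 hx1, abs_mul, abs_mul, abs_pow, abs_neg, abs_one, one_pow, one_mul,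
    abs_of_nonneg (pprodR_nonneg n x), abs_of_nonneg hy0]
  calc pprodR n x * pT^[n] x ≤ pprodR n x := mul_le_of_le_one_right (pprodR_nonneg n x) hy1'
    _ ≤ _ := pprodR_le_inv_factorial hx0 hx1 n

lemma summable_inv_factorial_succ :
    Summable (fun n : ℕ => (((n + 1).factorial : ℕ) : ℝ)⁻¹) := by
  refine (summable_nat_add_iff (f := fun n : ℕ => ((n.factorial : ℕ) : ℝ)⁻¹) 1).mpr
    ((Real.summable_pow_div_factorial 1).congr fun n => ?_)
  rw [one_pow, one_div]

lemma hasSum_pE {x : ℝ} (hx0 : 0 ≤ x) (hx1 : x ≤ 1) :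
    HasSum (fun n : ℕ => x - psum (n + 1) x) (pE x) :=
  (summable_inv_factorial_succ.of_norm_bounded fun n => abs_sub_psum_le hx0 hx1 (n + 1)).hasSum

lemma norm_pE_le {x : ℝ} (hx0 : 0 ≤ x) (hx1 : x ≤ 1) :
    ‖pE x‖ ≤ ∑' n : ℕ, (((n + 1).factorial : ℕ) : ℝ)⁻¹ :=
  tsum_of_norm_bounded summable_inv_factorial_succ.hasSum fun n => abs_sub_psum_le hx0 hx1 (n + 1)

lemma measurable_pinv_pd1 : Measurable fun x : ℝ => pinv (pd1 x) := by
  simp only [pinv_pd1]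
  exact Measurable.ite measurableSet_eq measurable_const
    (measurable_from_top.comp (Nat.measurable_floor.comp measurable_inv)).inv

lemma measurable_pT : Measurable pT :=
  Measurable.ite measurableSet_eq measurable_const (measurable_const.sub
    ((measurable_from_top.comp (Nat.measurable_floor.comp measurable_inv)).mul measurable_id))

lemma measurable_psum (n : ℕ) : Measurable (psum n) :=
  Finset.measurable_sum _ fun _ _ => (Finset.measurable_prod _ fun _ _ =>
    measurable_pinv_pd1.comp (measurable_pT.iterate _)).const_mul _

lemma integrableOn_pE : IntegrableOn pE (Icc 0 1) := by
  have hmem : ∀ᵐ x ∂volume.restrict (Icc (0 : ℝ) 1), x ∈ Icc (0 : ℝ) 1 :=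
    ae_restrict_mem measurableSet_Icc
  refine ⟨aestronglyMeasurable_of_tendsto_ae (f := fun N x => ∑ n ∈ Finset.range N,
    (x - psum (n + 1) x)) atTop (fun N => ?_) ?_, ?_⟩
  · exact (Finset.measurable_sum _ fun n _ =>
      measurable_id.sub (measurable_psum (n + 1))).aestronglyMeasurable
  · filter_upwards [hmem] with x hx
    exact (hasSum_pE hx.1 hx.2).tendsto_sum_nat
  · refine HasFiniteIntegral.restrict_of_bounded (C := ∑' n : ℕ, (((n + 1).factorial : ℕ) : ℝ)⁻¹)
      measure_Icc_lt_top ?_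
    filter_upwards [hmem] with x hx
    exact norm_pE_le hx.1 hx.2

lemma pE_eq_sub_pE_one_sub {x : ℝ} (hx : x ∈ Ioc (1 / 2 : ℝ) 1) :
    pE x = (x - 1) - pE (1 - x) := by
  obtain ⟨hx0, hx1⟩ := hx
  have hpos : 0 < x := by linarith
  have hfloor : ⌊x⁻¹⌋₊ = 1 := by
    rw [Nat.floor_eq_iff (by positivity), Nat.cast_one, one_add_one_eq_two]
    exact ⟨one_le_inv_iff₀.mpr ⟨hpos, hx1⟩, by rw [inv_lt_comm₀ hpos two_pos]; linarith⟩
  have hd : pinv (pd1 x) = 1 := by simp [pinv_pd1, hpos.ne', hfloor]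
  have hT : pT x = 1 - x := by simp [pT_of_ne_zero hpos.ne', hfloor]
  have hs : Summable fun n : ℕ => (1 - x) - psum n (1 - x) :=
    (summable_nat_add_iff 1).mp (hasSum_pE (by linarith) (by linarith)).summable
  calc pE x = ∑' n : ℕ, -((1 - x) - psum n (1 - x)) :=
        tsum_congr fun n => by rw [psum_succ', hd, hT]; ring
    _ = (x - 1) - pE (1 - x) := by
        rw [tsum_neg, hs.tsum_eq_zero_add, psum_zero, pE]; ring

open intervalIntegral in
lemma integral_zero_one_eq_of_eq_sub_reflect {f g : ℝ → ℝ} (hf : IntegrableOn f (Icc 0 1))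
    (hg : IntervalIntegrable g volume (1 / 2) 1)
    (h : ∀ x ∈ Ioc (1 / 2 : ℝ) 1, f x = g x - f (1 - x)) :
    ∫ x in (0 : ℝ)..1, f x = ∫ x in (1 / 2 : ℝ)..1, g x := by
  have hleft : IntervalIntegrable f volume 0 (1 / 2) := (hf.mono_set (by
    rw [uIcc_of_le (by norm_num)]; exact Icc_subset_Icc le_rfl (by norm_num))).intervalIntegrable
  have hright : IntervalIntegrable f volume (1 / 2) 1 := (hf.mono_set (by
    rw [uIcc_of_le (by norm_num)]; exact Icc_subset_Icc (by norm_num) le_rfl)).intervalIntegrable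
  have hrefl : IntervalIntegrable (fun x => f (1 - x)) volume (1 / 2) 1 := by
    have := (hleft.comp_sub_left 1).symm
    norm_num at this
    exact this
  calc ∫ x in (0 : ℝ)..1, f x = (∫ x in (0 : ℝ)..1 / 2, f x) + ∫ x in (1 / 2 : ℝ)..1, f x :=
        (integral_add_adjacent_intervals hleft hright).symm
    _ = (∫ x in (0 : ℝ)..1 / 2, f x) + ∫ x in (1 / 2 : ℝ)..1, (g x - f (1 - x)) := by
        congr 1
        refine integral_congr_ae (ae_of_all _ fun x hx => h x ?_)
        rwa [uIoc_of_le (by norm_num)] at hx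
    _ = ∫ x in (1 / 2 : ℝ)..1, g x := by
        rw [integral_sub hg hrefl, integral_comp_sub_left]
        norm_num

theorem stmt18 : ∫ x in (0 : ℝ)..1, pE x = -(1 / 8 : ℝ) := by
  rw [integral_zero_one_eq_of_eq_sub_reflect integrableOn_pE
    ((by fun_prop : Continuous fun x : ℝ => x - 1).intervalIntegrable _ _)
    fun x hx => pE_eq_sub_pE_one_sub hx]
  norm_num [intervalIntegral.integral_sub, integral_id]
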